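/- Let $\mathrm{Ste} > 0$ and $\mathrm{Pe} \in \mathbb{R}$. Define $g(\lambda) = \sqrt{\pi}\,\lambda\,\big(\mathrm{erf}(\mathrm{Pe}) - \mathrm{erf}(\mathrm{Pe}-\lambda)\big)\exp\big((\mathrm{Pe}-\lambda)^2\big)$ for $\lambda > 0$. Then $g$ is continuous with $g(0^+) = 0$ and $g(\lambda) \to +\infty$ as $\lambda \to +\infty$, so the equation $g(\lambda) = \mathrm{Ste}$ has at least one positive solution $\lambda$. -/

import Mathlib

noncomputable def erf (x : ℝ) : ℝ :=
  (2 / Real.sqrt Real.pi) * ∫ t in (0:ℝ)..x, Real.exp (-t ^ 2)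

open Real Filter Set

/- `g` is continuous with `g 0 = 0`. Since `erf` is strictly increasing and
`exp ((Pe - λ) ^ 2) ≥ 1`, for `λ ≥ 1` we get `g λ ≥ √π (erf Pe - erf (Pe - 1)) λ`, a positive
multiple of `λ`, so `g → ∞`; the intermediate value theorem on `(0, b]` then gives a root of
`g λ = Ste`. -/

theorem Ioi_subset_image_Ioi_of_tendsto_atTop {α δ : Type*}
    [ConditionallyCompleteLinearOrder α] [TopologicalSpace α] [OrderTopology α] [DenselyOrdered α]
    [LinearOrder δ] [TopologicalSpace δ] [OrderClosedTopology δ]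
    {f : α → δ} (hf : Continuous f) (htop : Tendsto f atTop atTop) (a : α) :
    Ioi (f a) ⊆ f '' Ioi a := by
  intro y hy
  obtain ⟨b, hyb, hab⟩ := ((htop.eventually_ge_atTop y).and (eventually_ge_atTop a)).exists
  obtain ⟨x, hx, rfl⟩ := intermediate_value_Ioc hab hf.continuousOn ⟨hy, hyb⟩
  exact ⟨x, hx.1, rfl⟩

lemma intervalIntegrable_exp_neg_sq (a b : ℝ) :
    IntervalIntegrable (fun t => exp (-t ^ 2)) MeasureTheory.volume a b :=
  (by fun_prop : Continuous fun t : ℝ => exp (-t ^ 2)).intervalIntegrable a b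

lemma continuous_erf : Continuous erf :=
  continuous_const.mul (intervalIntegral.continuous_primitive intervalIntegrable_exp_neg_sq 0)

lemma erf_sub_erf (a b : ℝ) :
    erf b - erf a = 2 / √π * ∫ t in a..b, exp (-t ^ 2) := by
  rw [erf, erf, ← mul_sub, intervalIntegral.integral_interval_sub_left
    (intervalIntegrable_exp_neg_sq 0 b) (intervalIntegrable_exp_neg_sq 0 a)]

lemma erf_strictMono : StrictMono erf := fun a b hab => by
  have hint : 0 < ∫ t in a..b, exp (-t ^ 2) :=
    intervalIntegral.intervalIntegral_pos_of_pos_on (intervalIntegrable_exp_neg_sq a b)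
      (fun _ _ => exp_pos _) hab
  rw [← sub_pos, erf_sub_erf]
  positivity

noncomputable def stefanFun (Pe lam : ℝ) : ℝ :=
  √π * lam * (erf Pe - erf (Pe - lam)) * exp ((Pe - lam) ^ 2)

lemma continuous_stefanFun (Pe : ℝ) : Continuous (stefanFun Pe) := by
  have := continuous_erf
  unfold stefanFun
  fun_prop

@[simp] lemma stefanFun_zero (Pe : ℝ) : stefanFun Pe 0 = 0 := by
  simp [stefanFun]

lemma mul_le_stefanFun (Pe : ℝ) {lam : ℝ} (hlam : 1 ≤ lam) :
    √π * (erf Pe - erf (Pe - 1)) * lam ≤ stefanFun Pe lam := by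
  have herf : erf Pe - erf (Pe - 1) ≤ erf Pe - erf (Pe - lam) :=
    sub_le_sub_left (erf_strictMono.monotone (by linarith)) _
  have hpos : 0 ≤ erf Pe - erf (Pe - 1) := sub_nonneg.2 (erf_strictMono.monotone (by linarith))
  calc √π * (erf Pe - erf (Pe - 1)) * lam ≤ √π * lam * (erf Pe - erf (Pe - lam)) := by
        rw [mul_right_comm]; gcongr
    _ ≤ stefanFun Pe lam :=
        le_mul_of_one_le_right
          (mul_nonneg (mul_nonneg (sqrt_nonneg _) (by linarith)) (hpos.trans herf))
          (one_le_exp (sq_nonneg _))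

lemma tendsto_stefanFun_atTop (Pe : ℝ) : Tendsto (stefanFun Pe) atTop atTop := by
  have hc : 0 < √π * (erf Pe - erf (Pe - 1)) :=
    mul_pos (sqrt_pos.2 pi_pos) (sub_pos.2 (erf_strictMono (by linarith)))
  exact tendsto_atTop_mono' atTop (eventually_atTop.2 ⟨1, fun _ => mul_le_stefanFun Pe⟩)
    (tendsto_id.const_mul_atTop hc)

theorem stmt_13 (Ste Pe : ℝ) (hSte : 0 < Ste)
    (g : ℝ → ℝ)
    (hg : ∀ lam, g lam =
      Real.sqrt Real.pi * lam * (erf Pe - erf (Pe - lam)) * Real.exp ((Pe - lam) ^ 2)) :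
    Continuous g ∧
    Filter.Tendsto g (nhdsWithin 0 (Set.Ioi 0)) (nhds 0) ∧
    Filter.Tendsto g Filter.atTop Filter.atTop ∧
    (∃ lam : ℝ, 0 < lam ∧ g lam = Ste) := by
  obtain rfl : g = stefanFun Pe := funext hg
  have hcont := continuous_stefanFun Pe
  have htop := tendsto_stefanFun_atTop Pe
  refine ⟨hcont, ?_, htop, ?_⟩
  · simpa using (hcont.tendsto 0).mono_left nhdsWithin_le_nhds
  · exact Ioi_subset_image_Ioi_of_tendsto_atTop hcont htop 0 (by simpa using hSte)
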